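/- Let Z = Z(a) ⊆ N_ℝ be the zonotope of a primitive spanning configuration a ∈ N^E, and suppose Z is a parallelotope (a is a basis of N_ℝ with each a_e primitive). Then the only tiling of Z by integral zonotopes is the trivial tiling consisting of Z and its faces. -/

import Mathlib

open Finset Pointwise MvPolynomial

namespace Hypertoric

/-- Cast an integer vector to a real vector. -/
def castR {n : ℕ} (v : Fin n → ℤ) : Fin n → ℝ := fun i => (v i : ℝ)

/-- Real dot product. -/
def dotR {n : ℕ} (c x : Fin n → ℝ) : ℝ := ∑ i, c i * x i

/-- Integer dot product (evaluation of the functional `m = c·` on `v`). -/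
def dotZ {n : ℕ} (c v : Fin n → ℤ) : ℤ := ∑ i, c i * v i

/-- A coefficient vector `t` adapted to a sign vector `u`:
`t e ∈ [-1,1]` when `u e = 0`, `t e = 1` when `u e = +`, `t e = -1` when `u e = -`. -/
def Adapted {E : Type*} (u : E → SignType) (t : E → ℝ) : Prop :=
  (∀ e, u e = 0 → t e ∈ Set.Icc (-1 : ℝ) 1) ∧ (∀ e, u e = 1 → t e = 1) ∧
    (∀ e, u e = -1 → t e = -1)

/-- The zonotope `Z(a,u) = Σ_{u_e=0}[-1,1]a_e + Σ_{u_e=+}a_e - Σ_{u_e=-}a_e ⊆ N_ℝ`. -/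
def zonotopeSigned {n : ℕ} {E : Type*} [Fintype E] (a : E → Fin n → ℤ)
    (u : E → SignType) : Set (Fin n → ℝ) :=
  {x | ∃ t : E → ℝ, Adapted u t ∧ x = ∑ e, t e • castR (a e)}

/-- The zonotope `Z(a) = Σ_e [-1,1]·a_e`. -/
def zonotope {n : ℕ} {E : Type*} [Fintype E] (a : E → Fin n → ℤ) : Set (Fin n → ℝ) :=
  zonotopeSigned a 0

/-- `F` is a (nonempty) face of `S`: the set of maximizers of a linear functional on `S`. -/
def IsFaceOf {n : ℕ} (F S : Set (Fin n → ℝ)) : Prop :=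
  F.Nonempty ∧ ∃ c : Fin n → ℝ, F = {x ∈ S | ∀ y ∈ S, dotR c y ≤ dotR c x}

/-- An integral zonotope: an integral translate of a zonotope of integral vectors. -/
def IsIntegralZonotope {n : ℕ} (S : Set (Fin n → ℝ)) : Prop :=
  ∃ (m : ℕ) (b : Fin m → Fin n → ℤ) (η : Fin n → ℤ),
    S = (fun x => castR η + x) '' zonotope b

/-- A tiling of `Z` by integral zonotopes. -/
def IsTiling {n : ℕ} (T : Set (Set (Fin n → ℝ))) (Z : Set (Fin n → ℝ)) : Prop :=
  (∀ F ∈ T, IsIntegralZonotope F) ∧ (⋃₀ T = Z) ∧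
    (∀ F' ∈ T, ∀ F, IsFaceOf F F' → F ∈ T) ∧
    (∀ F ∈ T, ∀ F' ∈ T, (F ∩ F').Nonempty → IsFaceOf (F ∩ F') F ∧ IsFaceOf (F ∩ F') F')

/-- A primitive integer vector. -/
def IsPrimitive {n : ℕ} (v : Fin n → ℤ) : Prop :=
  v ≠ 0 ∧ ∀ (k : ℤ) (w : Fin n → ℤ), v = k • w → IsUnit k

/-- A primitive spanning configuration. -/
def IsPrimSpanning {n : ℕ} {E : Type*} (a : E → Fin n → ℤ) : Prop :=
  (∀ e, IsPrimitive (a e)) ∧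
    Submodule.span ℝ (Set.range fun e => castR (a e)) = ⊤

/-- A cube: translate of the zonotope of a `ℤ`-basis of `N`. -/
def IsCube {n : ℕ} (S : Set (Fin n → ℝ)) : Prop :=
  ∃ (b : Fin n → Fin n → ℤ) (η : Fin n → ℤ),
    Submodule.span ℤ (Set.range b) = ⊤ ∧ LinearIndependent ℤ b ∧
    S = (fun x => castR η + x) '' zonotope b

/-- A parallelotope: translate of the zonotope of primitive vectors forming an `ℝ`-basis. -/
def IsParallelotope {n : ℕ} (S : Set (Fin n → ℝ)) : Prop :=
  ∃ (b : Fin n → Fin n → ℤ) (η : Fin n → ℤ),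
    (∀ j, IsPrimitive (b j)) ∧ (LinearIndependent ℝ fun j => castR (b j)) ∧
    S = (fun x => castR η + x) '' zonotope b

/-!
Induct on the faces `P = Z(a, u)` of the parallelotope, from the vertices upwards. For a free
coordinate `e₀`, the tiles inside the facet `G` of `P` on which the `e₀`-coordinate is `1` tile
`G`, so `G` is a tile. Since the tiling is finite and its tiles are closed, some tile `F` contains
the center of `G` together with points of `P \ G`; a face of `G` through its center is `G`
itself, so `G ⊆ F`. The tile `F` is centrally symmetric about a lattice point `η`. Symmetry forces
every coordinate of `η` other than the `e₀`-th to agree with the center of `P` and puts the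
`e₀`-th in `[0, 1]`, and primitivity of `a e₀` makes it an integer. If it is `1` then `F = G`,
which is impossible; if it is `0` then `F = P`.
-/

section Faces

variable {n : ℕ}

lemma exists_dotR_eq (f : (Fin n → ℝ) →ₗ[ℝ] ℝ) : ∃ c : Fin n → ℝ, ∀ x, dotR c x = f x := by
  refine ⟨fun i => f fun j => if i = j then 1 else 0, fun x => ?_⟩
  simp only [f.pi_apply_eq_sum_univ x, dotR, smul_eq_mul, mul_comm]

def IsSymmetricAbout (S : Set (Fin n → ℝ)) (p : Fin n → ℝ) : Prop :=
  ∀ y ∈ S, (2 : ℝ) • p - y ∈ S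

lemma IsFaceOf.subset {F S : Set (Fin n → ℝ)} (h : IsFaceOf F S) : F ⊆ S := by
  obtain ⟨-, c, rfl⟩ := h
  exact fun x hx => hx.1

lemma IsFaceOf.eq_of_center_mem {F S : Set (Fin n → ℝ)} {p : Fin n → ℝ} (hF : IsFaceOf F S)
    (hS : IsSymmetricAbout S p) (hp : p ∈ F) : F = S := by
  obtain ⟨-, c, rfl⟩ := hF
  refine Set.Subset.antisymm (fun x hx => hx.1) fun y hy => ⟨hy, fun z hz => ?_⟩
  have hreflect : dotProduct c ((2 : ℝ) • p - y) ≤ dotProduct c p := hp.2 _ (hS y hy)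
  have hz : dotProduct c z ≤ dotProduct c p := hp.2 z hz
  rw [dotProduct_sub, dotProduct_smul, smul_eq_mul] at hreflect
  change dotProduct c z ≤ dotProduct c y
  linarith

lemma IsFaceOf.inter_of_subset {G S F : Set (Fin n → ℝ)} (hG : IsFaceOf G S) (hFS : F ⊆ S)
    (hne : (F ∩ G).Nonempty) : IsFaceOf (F ∩ G) F := by
  obtain ⟨-, c, rfl⟩ := hG
  obtain ⟨z, hzF, -, hzmax⟩ := hne
  refine ⟨⟨z, hzF, hFS hzF, hzmax⟩, c, Set.Subset.antisymm ?_ ?_⟩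
  · exact fun x ⟨hxF, _, hxmax⟩ => ⟨hxF, fun y hy => hxmax y (hFS hy)⟩
  · exact fun x ⟨hxF, hxmax⟩ =>
      ⟨hxF, hFS hxF, fun y hy => (hzmax y hy).trans (hxmax z hzF)⟩

end Faces

section Adapted

variable {E : Type*} {u : E → SignType} {t : E → ℝ}

lemma adapted_iff : Adapted u t ↔ ∀ e, |t e| ≤ 1 ∧ (u e = 0 ∨ t e = u e) := by
  simp only [Adapted, ← forall_and]
  refine forall_congr' fun e => ?_
  cases u e <;> simp [abs_le] <;> intro h <;> norm_num [h]

lemma adapted_coe (u : E → SignType) : Adapted u fun e => (u e : ℝ) :=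
  adapted_iff.2 fun e => ⟨by cases u e <;> simp, Or.inr rfl⟩

lemma Adapted.two_smul_sub (ht : Adapted u t) : Adapted u ((2 : ℝ) • (fun e => (u e : ℝ)) - t) := by
  refine adapted_iff.2 fun e => ?_
  obtain ⟨hte, hue | hue⟩ := adapted_iff.1 ht e
  · simp [hue, hte]
  · rw [Pi.sub_apply, Pi.smul_apply, smul_eq_mul, hue, two_mul, add_sub_cancel_right]
    exact ⟨hue ▸ hte, Or.inr rfl⟩

variable [DecidableEq E]

lemma Adapted.update (ht : Adapted u t) {e : E} (hue : u e = 0) {s : ℝ} (hs : |s| ≤ 1) :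
    Adapted u (Function.update t e s) := by
  refine adapted_iff.2 fun f => ?_
  rcases eq_or_ne f e with rfl | hf
  · simp [hs, hue]
  · simpa [hf] using adapted_iff.1 ht f

lemma adapted_update_one_iff {e₀ : E} (hu : u e₀ = 0) :
    Adapted (Function.update u e₀ 1) t ↔ Adapted u t ∧ t e₀ = 1 := by
  simp only [adapted_iff]
  constructor
  · intro h
    refine ⟨fun e => ?_, by simpa using (h e₀).2⟩
    rcases eq_or_ne e e₀ with rfl | he
    · simp [hu, (h e).1]
    · simpa [he] using h e
  · rintro ⟨h, he₀⟩ e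
    rcases eq_or_ne e e₀ with rfl | he
    · simp [he₀]
    · simpa [he] using h e

end Adapted

section IntegralZonotope

variable {n : ℕ} {E : Type*} [Fintype E]

lemma castR_sub (v w : Fin n → ℤ) : castR (v - w) = castR v - castR w := by
  ext i
  simp [castR]

lemma castR_add (v w : Fin n → ℤ) : castR (v + w) = castR v + castR w := by
  ext i
  simp [castR]

lemma castR_sum_smul (k : E → ℤ) (b : E → Fin n → ℤ) :
    castR (∑ e, k e • b e) = ∑ e, (k e : ℝ) • castR (b e) := by
  ext i
  simp [castR, Finset.sum_apply]

lemma zonotope_eq_convexHull (b : E → Fin n → ℤ) :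
    zonotope b = convexHull ℝ ((fun t : E → ℝ => ∑ e, t e • castR (b e)) ''
      Set.univ.pi fun _ => {-1, 1}) := by
  let L : (E → ℝ) →ₗ[ℝ] Fin n → ℝ := ∑ e, (LinearMap.proj e).smulRight (castR (b e))
  have hL : ⇑L = fun t => ∑ e, t e • castR (b e) := by ext; simp [L]
  have hcube : Set.univ.pi (fun _ : E => Set.Icc (-1 : ℝ) 1) =
      convexHull ℝ (Set.univ.pi fun _ => {-1, 1}) := by
    rw [convexHull_pi, convexHull_pair, segment_eq_Icc (by norm_num)]
  rw [← hL, ← L.image_convexHull, ← hcube]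
  ext x
  simp only [zonotope, zonotopeSigned, adapted_iff, Pi.zero_apply, true_or, and_true,
    Set.mem_ofPred_eq, Set.mem_image, Set.mem_univ_pi, Set.mem_Icc, ← abs_le, hL]
  exact ⟨fun ⟨t, ht, hx⟩ => ⟨t, ht, hx.symm⟩, fun ⟨t, ht, hx⟩ => ⟨t, ht, hx.symm⟩⟩

variable {S : Set (Fin n → ℝ)}

lemma IsIntegralZonotope.exists_center (h : IsIntegralZonotope S) :
    ∃ η : Fin n → ℤ, castR η ∈ S ∧ IsSymmetricAbout S (castR η) := by
  obtain ⟨m, b, η, rfl⟩ := h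
  refine ⟨η, ⟨0, ⟨0, adapted_coe 0, by simp⟩, by simp⟩, ?_⟩
  rintro _ ⟨_, ⟨t, ht, rfl⟩, rfl⟩
  refine ⟨_, ⟨-t, by convert ht.two_smul_sub using 1; ext; simp, rfl⟩, ?_⟩
  simp only [Pi.neg_apply, neg_smul, Finset.sum_neg_distrib]
  module

lemma IsIntegralZonotope.nonempty (h : IsIntegralZonotope S) : S.Nonempty :=
  let ⟨η, hη, _⟩ := h.exists_center
  ⟨castR η, hη⟩

lemma IsIntegralZonotope.exists_finite_latticePoints (h : IsIntegralZonotope S) :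
    ∃ V : Set (Fin n → ℝ), V.Finite ∧ V ⊆ castR '' (castR ⁻¹' S) ∧ S = convexHull ℝ V := by
  obtain ⟨m, b, η, rfl⟩ := h
  set A := (fun t : Fin m → ℝ => ∑ e, t e • castR (b e)) '' Set.univ.pi fun _ => {-1, 1}
  have hS : (castR η + ·) '' zonotope b = convexHull ℝ ((castR η + ·) '' A) := by
    rw [zonotope_eq_convexHull, ← Set.singleton_add, ← Set.singleton_add, convexHull_add,
      convexHull_singleton]
  refine ⟨(castR η + ·) '' A, ((Set.Finite.pi fun _ => by simp).image _).image _, ?_, hS⟩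
  rintro _ ⟨_, ⟨t, ht, rfl⟩, rfl⟩
  have hint : ∀ e, ∃ k : ℤ, (k : ℝ) = t e := fun e => by
    rcases ht e (Set.mem_univ e) with h | h
    exacts [⟨-1, by simp [h]⟩, ⟨1, by simp [Set.mem_singleton_iff.1 h]⟩]
  choose k hk using hint
  have hcast : castR (η + ∑ e, k e • b e) = castR η + ∑ e, t e • castR (b e) := by
    simp only [castR_add, castR_sum_smul, hk]
  refine ⟨η + ∑ e, k e • b e, ?_, hcast⟩
  rw [Set.mem_preimage, hcast, hS]
  exact subset_convexHull ℝ _ ⟨_, ⟨t, ht, rfl⟩, rfl⟩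

lemma IsIntegralZonotope.isCompact (h : IsIntegralZonotope S) : IsCompact S := by
  obtain ⟨V, hV, -, rfl⟩ := h.exists_finite_latticePoints
  exact hV.isCompact_convexHull ℝ

lemma IsIntegralZonotope.convex (h : IsIntegralZonotope S) : Convex ℝ S := by
  obtain ⟨V, -, -, rfl⟩ := h.exists_finite_latticePoints
  exact convex_convexHull ℝ V

lemma IsIntegralZonotope.eq_convexHull_latticePoints (h : IsIntegralZonotope S) :
    S = convexHull ℝ (castR '' (castR ⁻¹' S)) := by
  obtain ⟨V, -, hV, hS⟩ := h.exists_finite_latticePoints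
  refine Set.Subset.antisymm ?_ ?_
  · exact hS.trans_subset (convexHull_mono hV)
  · exact convexHull_min (Set.image_preimage_subset _ _) h.convex

end IntegralZonotope

section Tiling

variable {n : ℕ} {T : Set (Set (Fin n → ℝ))} {Z : Set (Fin n → ℝ)}

lemma finite_latticePoints {K : Set (Fin n → ℝ)} (hK : Bornology.IsBounded K) :
    (castR ⁻¹' K).Finite :=
  ((Topology.IsClosedEmbedding.piMap fun _ => Real.isClosedEmbedding_intCast).isCompact_preimage
    hK.isCompact_closure).finite_of_discrete.subset fun _ hv => subset_closure hv

lemma IsTiling.subset_of_mem (hT : IsTiling T Z) {F : Set (Fin n → ℝ)} (hF : F ∈ T) : F ⊆ Z :=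
  hT.2.1 ▸ Set.subset_sUnion_of_mem hF

/-- A tile is the convex hull of its lattice points, so a tiling of a bounded set is finite. -/
lemma IsTiling.finite (hT : IsTiling T Z) (hZ : Bornology.IsBounded Z) : T.Finite := by
  refine Set.Finite.of_finite_image (f := (castR ⁻¹' ·))
    ((finite_latticePoints hZ).finite_subsets.subset ?_) ?_
  · rintro _ ⟨F, hF, rfl⟩
    exact Set.preimage_mono (hT.subset_of_mem hF)
  · intro F hF F' hF' h
    rw [(hT.1 F hF).eq_convexHull_latticePoints, (hT.1 F' hF').eq_convexHull_latticePoints]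
    exact congrArg _ (congrArg _ h)

lemma IsTiling.exists_mem_not_subset (hT : IsTiling T Z) (hfin : T.Finite)
    {G : Set (Fin n → ℝ)} {p : Fin n → ℝ} (hp : p ∈ closure (Z \ G)) :
    ∃ F ∈ T, p ∈ F ∧ ¬ F ⊆ G := by
  by_contra! h
  set C := {F ∈ T | p ∉ F}
  have hclosed : IsClosed (⋃₀ C) := by
    rw [Set.sUnion_eq_biUnion]
    exact (hfin.subset fun F (hF : F ∈ C) => hF.1).isClosed_biUnion
      fun F hF => (hT.1 F hF.1).isCompact.isClosed
  have hcover : Z \ G ⊆ ⋃₀ C := by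
    rintro x ⟨hxZ, hxG⟩
    obtain ⟨F, hF, hxF⟩ := hT.2.1.symm ▸ hxZ
    exact ⟨F, ⟨hF, fun hpF => hxG (h F hF hpF hxF)⟩, hxF⟩
  obtain ⟨F, ⟨-, hpF⟩, hpF'⟩ := closure_minimal hcover hclosed hp
  exact hpF hpF'

lemma IsTiling.restrict (hT : IsTiling T Z) {G : Set (Fin n → ℝ)} (hG : IsFaceOf G Z) :
    IsTiling {F ∈ T | F ⊆ G} G := by
  refine ⟨fun F hF => hT.1 F hF.1, ?_, fun F hF W hW => ⟨hT.2.2.1 F hF.1 W hW,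
    hW.subset.trans hF.2⟩, fun F hF F' hF' => hT.2.2.2 F hF.1 F' hF'.1⟩
  refine Set.Subset.antisymm (Set.sUnion_subset fun F hF => hF.2) fun x hxG => ?_
  obtain ⟨F, hF, hxF⟩ := hT.2.1.symm ▸ hG.subset hxG
  exact ⟨F ∩ G, ⟨hT.2.2.1 F hF _ (hG.inter_of_subset (hT.subset_of_mem hF) ⟨x, hxF, hxG⟩),
    Set.inter_subset_right⟩, hxF, hxG⟩

lemma IsTiling.mem_of_subsingleton (hT : IsTiling T Z) (hZ : Z.Subsingleton)
    (hne : Z.Nonempty) : Z ∈ T := by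
  obtain ⟨p, hp⟩ := hne
  obtain ⟨F, hF, hpF⟩ := hT.2.1.symm ▸ hp
  have hZF : Z ⊆ F := fun x hx => hZ hx hp ▸ hpF
  exact hZF.antisymm (hT.subset_of_mem hF) ▸ hF

lemma IsTiling.eq_setOf_isFaceOf (hT : IsTiling T Z) (hZ : Z ∈ T) : T = {F | IsFaceOf F Z} := by
  ext F
  refine ⟨fun hF => ?_, hT.2.2.1 Z hZ F⟩
  have hFZ : F ∩ Z = F := Set.inter_eq_left.2 (hT.subset_of_mem hF)
  simpa [hFZ] using (hT.2.2.2 F hF Z hZ (hFZ.symm ▸ (hT.1 F hF).nonempty)).2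

end Tiling

section Coordinates

variable {n : ℕ} {E : Type*} [Fintype E] {a : E → Fin n → ℤ}

lemma zonotopeSigned_subset_zonotope (u : E → SignType) : zonotopeSigned a u ⊆ zonotope a := by
  rintro _ ⟨t, ht, rfl⟩
  exact ⟨t, adapted_iff.2 fun e => ⟨(adapted_iff.1 ht e).1, Or.inl rfl⟩, rfl⟩

lemma isCompact_zonotope (a : E → Fin n → ℤ) : IsCompact (zonotope a) := by
  rw [zonotope_eq_convexHull]
  exact ((Set.Finite.pi fun _ => by simp).image _).isCompact_convexHull ℝ

def zonotopeCenter (a : E → Fin n → ℤ) (u : E → SignType) : Fin n → ℤ :=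
  ∑ e, (u e : ℤ) • a e

variable {B : Module.Basis E ℝ (Fin n → ℝ)} {u : E → SignType}

lemma mem_zonotopeSigned_iff (hB : ∀ e, B e = castR (a e)) {x : Fin n → ℝ} :
    x ∈ zonotopeSigned a u ↔ Adapted u (B.equivFun x) := by
  have hsum : ∀ t, ∑ e, t e • castR (a e) = B.equivFun.symm t := fun t => by
    simp [Module.Basis.equivFun_symm_apply, hB]
  simp only [zonotopeSigned, Set.mem_ofPred_eq, hsum]
  constructor
  · rintro ⟨t, ht, rfl⟩
    rwa [LinearEquiv.apply_symm_apply]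
  · exact fun h => ⟨_, h, by simp⟩

lemma equivFun_zonotopeCenter (hB : ∀ e, B e = castR (a e)) :
    B.equivFun (castR (zonotopeCenter a u)) = fun e => (u e : ℝ) := by
  rw [zonotopeCenter, castR_sum_smul, ← B.equivFun.eq_symm_apply, B.equivFun_symm_apply]
  simp [hB]

lemma zonotopeCenter_mem (hB : ∀ e, B e = castR (a e)) :
    castR (zonotopeCenter a u) ∈ zonotopeSigned a u := by
  rw [mem_zonotopeSigned_iff hB, equivFun_zonotopeCenter hB]
  exact adapted_coe u

lemma isSymmetricAbout_zonotopeSigned (hB : ∀ e, B e = castR (a e)) :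
    IsSymmetricAbout (zonotopeSigned a u) (castR (zonotopeCenter a u)) := by
  intro y hy
  rw [mem_zonotopeSigned_iff hB] at hy ⊢
  rw [map_sub, map_smul, equivFun_zonotopeCenter hB]
  exact hy.two_smul_sub

lemma zonotopeSigned_subsingleton (hB : ∀ e, B e = castR (a e)) (hu : ∀ e, u e ≠ 0) :
    (zonotopeSigned a u).Subsingleton := by
  have hcoord : ∀ x ∈ zonotopeSigned a u, B.equivFun x = fun e => (u e : ℝ) := fun x hx => by
    ext e
    exact ((adapted_iff.1 ((mem_zonotopeSigned_iff hB).1 hx) e).2.resolve_left (hu e))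
  exact fun x hx y hy => B.equivFun.injective ((hcoord x hx).trans (hcoord y hy).symm)

variable [DecidableEq E] {e₀ : E}

lemma mem_zonotopeSigned_update_one_iff (hB : ∀ e, B e = castR (a e)) (hu : u e₀ = 0)
    {x : Fin n → ℝ} :
    x ∈ zonotopeSigned a (Function.update u e₀ 1) ↔
      x ∈ zonotopeSigned a u ∧ B.equivFun x e₀ = 1 := by
  simp only [mem_zonotopeSigned_iff hB, adapted_update_one_iff hu]

lemma isFaceOf_zonotopeSigned_update_one (hB : ∀ e, B e = castR (a e)) (hu : u e₀ = 0) :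
    IsFaceOf (zonotopeSigned a (Function.update u e₀ 1)) (zonotopeSigned a u) := by
  obtain ⟨c, hc⟩ := exists_dotR_eq ((LinearMap.proj e₀).comp B.equivFun.toLinearMap)
  have hle : ∀ y ∈ zonotopeSigned a u, B.equivFun y e₀ ≤ 1 := fun y hy =>
    (abs_le.1 (adapted_iff.1 ((mem_zonotopeSigned_iff hB).1 hy) e₀).1).2
  have hcenter := zonotopeCenter_mem (a := a) (u := Function.update u e₀ 1) hB
  refine ⟨⟨_, hcenter⟩, c, Set.ext fun x => ?_⟩
  rw [mem_zonotopeSigned_update_one_iff hB hu] at hcenter ⊢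
  simp only [Set.mem_ofPred_eq, hc, LinearMap.coe_comp, Function.comp_apply,
    LinearMap.proj_apply, LinearEquiv.coe_coe]
  refine and_congr_right fun hx => ⟨fun h y hy => h ▸ hle y hy, fun h => ?_⟩
  exact le_antisymm (hle x hx) (hcenter.2 ▸ h _ hcenter.1)

lemma center_mem_closure_diff (hB : ∀ e, B e = castR (a e)) (hu : u e₀ = 0) :
    castR (zonotopeCenter a (Function.update u e₀ 1)) ∈
      closure (zonotopeSigned a u \ zonotopeSigned a (Function.update u e₀ 1)) := by
  set q : ℝ → Fin n → ℝ := fun s => B.equivFun.symm (Function.update (fun e => (u e : ℝ)) e₀ s)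
  have hq1 : q 1 = castR (zonotopeCenter a (Function.update u e₀ 1)) := by
    rw [LinearEquiv.symm_apply_eq, equivFun_zonotopeCenter hB]
    ext e
    rcases eq_or_ne e e₀ with rfl | he
    · simp
    · simp [he]
  have hcont : Continuous q :=
    B.equivFun.symm.toLinearMap.continuous_of_finiteDimensional.comp
      (continuous_const.update e₀ continuous_id)
  refine hq1 ▸ mem_closure_of_tendsto (hcont.continuousWithinAt (s := Set.Iio 1))
    (Filter.mem_of_superset (Ioo_mem_nhdsLT (by norm_num : (0 : ℝ) < 1)) fun s hs => ?_)
  simp only [Set.mem_sdiff, mem_zonotopeSigned_update_one_iff hB hu, q,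
    LinearEquiv.apply_symm_apply, mem_zonotopeSigned_iff hB, Function.update_self]
  refine ⟨(adapted_coe u).update hu (abs_le.2 ⟨by linarith [hs.1], hs.2.le⟩), fun h => ?_⟩
  exact hs.2.ne h.2

end Coordinates

section Primitive

variable {n : ℕ}

lemma IsPrimitive.exists_int_of_castR_eq_smul {v x : Fin n → ℤ} (hv : IsPrimitive v) {r : ℝ}
    (h : castR x = r • castR v) : ∃ k : ℤ, r = k := by
  obtain ⟨hv0, hvp⟩ := hv
  obtain ⟨i₀, hi₀⟩ := Function.ne_iff.1 hv0
  have hx : ∀ i, (x i : ℝ) = r * v i := fun i => by simpa [castR] using congrFun h i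
  set q : ℚ := x i₀ / v i₀
  have hr : r = q := by
    have : (v i₀ : ℝ) ≠ 0 := by exact_mod_cast hi₀
    simp only [q, Rat.cast_div, Rat.cast_intCast, hx i₀]
    field_simp
  -- the denominator of `r` in lowest terms divides every entry of `v`
  have hcross : ∀ i, (q.den : ℤ) * x i = q.num * v i := fun i => by
    have hq : (x i : ℚ) = q * v i := by exact_mod_cast (hr ▸ hx i : (x i : ℝ) = (q : ℝ) * v i)
    have : ((q.den * x i : ℤ) : ℚ) = (q.num * v i : ℤ) := by
      push_cast
      rw [hq, ← mul_assoc, Rat.den_mul_eq_num]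
    exact_mod_cast this
  have hdvd : ∀ i, (q.den : ℤ) ∣ v i := fun i =>
    q.isCoprime_num_den.symm.dvd_of_dvd_mul_left ⟨x i, (hcross i).symm⟩
  have hden : IsUnit (q.den : ℤ) :=
    hvp _ (fun i => v i / q.den) (funext fun i => (Int.mul_ediv_cancel' (hdvd i)).symm)
  have hden1 : q.den = 1 := Nat.isUnit_iff.1 (Int.ofNat_isUnit.1 hden)
  exact ⟨q.num, hr.trans (by exact_mod_cast (Rat.coe_int_num_of_den_eq_one hden1).symm)⟩

end Primitive

section Dichotomy

variable {n : ℕ} {E : Type*} [Fintype E] [DecidableEq E] {a : E → Fin n → ℤ}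
  {B : Module.Basis E ℝ (Fin n → ℝ)} {u : E → SignType} {e₀ : E} {F : Set (Fin n → ℝ)}
  {p : Fin n → ℝ}

lemma adapted_reflect_of_facet_subset (hB : ∀ e, B e = castR (a e))
    (hGF : zonotopeSigned a (Function.update u e₀ 1) ⊆ F) (hFP : F ⊆ zonotopeSigned a u)
    (hF : IsSymmetricAbout F p) {t : E → ℝ} (ht : Adapted (Function.update u e₀ 1) t) :
    Adapted u ((2 : ℝ) • B.equivFun p - t) := by
  have hmem : B.equivFun.symm t ∈ F :=
    hGF ((mem_zonotopeSigned_iff hB).2 (by rwa [LinearEquiv.apply_symm_apply]))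
  have := (mem_zonotopeSigned_iff hB).1 (hFP (hF _ hmem))
  rwa [map_sub, map_smul, LinearEquiv.apply_symm_apply] at this

lemma equivFun_apply_eq_of_facet_subset (hB : ∀ e, B e = castR (a e))
    (hGF : zonotopeSigned a (Function.update u e₀ 1) ⊆ F) (hFP : F ⊆ zonotopeSigned a u)
    (hF : IsSymmetricAbout F p) {e : E} (he : e ≠ e₀) : B.equivFun p e = u e := by
  have hrefl : ∀ t, Adapted (Function.update u e₀ 1) t →
      |2 * B.equivFun p e - t e| ≤ 1 ∧ (u e = 0 ∨ 2 * B.equivFun p e - t e = u e) := fun t ht =>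
    by simpa using adapted_iff.1 (adapted_reflect_of_facet_subset hB hGF hFP hF ht) e
  have hc := adapted_coe (Function.update u e₀ 1)
  by_cases hue : u e = 0
  · have hue' : Function.update u e₀ 1 e = 0 := by simp [he, hue]
    have hpos := (hrefl _ (hc.update hue' (s := 1) (by norm_num))).1
    have hneg := (hrefl _ (hc.update hue' (s := -1) (by norm_num))).1
    simp only [Function.update_self] at hpos hneg
    rw [hue, SignType.coe_zero]
    linarith [(abs_le.1 hpos).1, (abs_le.1 hneg).2]
  · have := (hrefl _ hc).2.resolve_left hue
    simp only [ne_eq, he, not_false_eq_true, Function.update_of_ne] at this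
    linarith

lemma equivFun_apply_mem_Icc_of_facet_subset (hB : ∀ e, B e = castR (a e))
    (hGF : zonotopeSigned a (Function.update u e₀ 1) ⊆ F) (hFP : F ⊆ zonotopeSigned a u)
    (hF : IsSymmetricAbout F p) : B.equivFun p e₀ ∈ Set.Icc 0 1 := by
  have := adapted_iff.1
    (adapted_reflect_of_facet_subset hB hGF hFP hF (adapted_coe (Function.update u e₀ 1))) e₀
  simp only [Pi.sub_apply, Pi.smul_apply, smul_eq_mul, Function.update_self,
    SignType.coe_one, abs_le] at this
  constructor <;> linarith [this.1.1, this.1.2]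

lemma exists_int_equivFun_apply (hB : ∀ e, B e = castR (a e)) (hprim : IsPrimitive (a e₀))
    (hu : u e₀ = 0) {η : Fin n → ℤ} (hη : ∀ e ≠ e₀, B.equivFun (castR η) e = u e) :
    ∃ k : ℤ, B.equivFun (castR η) e₀ = k := by
  refine hprim.exists_int_of_castR_eq_smul (x := η - zonotopeCenter a u) ?_
  refine B.equivFun.injective (funext fun e => ?_)
  rw [castR_sub, map_sub, map_smul, ← hB, Pi.sub_apply, equivFun_zonotopeCenter hB,
    Pi.smul_apply, B.equivFun_self]
  rcases eq_or_ne e e₀ with rfl | he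
  · simp [hu]
  · simp [hη e he, he.symm]

lemma subset_facet_of_equivFun_apply_eq_one (hB : ∀ e, B e = castR (a e)) (hu : u e₀ = 0)
    (hFP : F ⊆ zonotopeSigned a u) (hF : IsSymmetricAbout F p) (hp : B.equivFun p e₀ = 1) :
    F ⊆ zonotopeSigned a (Function.update u e₀ 1) := by
  intro x hx
  have hcoord : ∀ y ∈ F, |B.equivFun y e₀| ≤ 1 := fun y hy =>
    (adapted_iff.1 ((mem_zonotopeSigned_iff hB).1 (hFP hy)) e₀).1
  have hx' := hcoord _ (hF x hx)
  simp only [map_sub, map_smul, Pi.sub_apply, Pi.smul_apply, smul_eq_mul, hp] at hx'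
  refine (mem_zonotopeSigned_update_one_iff hB hu).2 ⟨hFP hx, ?_⟩
  linarith [(abs_le.1 hx').2, (abs_le.1 (hcoord x hx)).2]

/-- Every point of `zonotopeSigned a u` lies on a segment from the facet where the
`e₀`-coordinate is `1` to the opposite facet, and the opposite facet is the reflection of the
first through the center. -/
lemma zonotopeSigned_subset_of_facet_subset (hB : ∀ e, B e = castR (a e)) (hu : u e₀ = 0)
    (hconv : Convex ℝ F) (hF : IsSymmetricAbout F p) (hp : B.equivFun p = fun e => (u e : ℝ))
    (hGF : zonotopeSigned a (Function.update u e₀ 1) ⊆ F) : zonotopeSigned a u ⊆ F := by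
  intro x hx
  set t := B.equivFun x
  have ht : Adapted u t := (mem_zonotopeSigned_iff hB).1 hx
  have hte := abs_le.1 (adapted_iff.1 ht e₀).1
  have hfacet : ∀ s : E → ℝ, Adapted u s → s e₀ = 1 → B.equivFun.symm s ∈ F := fun s hs hs₁ =>
    hGF ((mem_zonotopeSigned_update_one_iff hB hu).2
      ⟨(mem_zonotopeSigned_iff hB).2 (by rwa [LinearEquiv.apply_symm_apply]),
        by rw [LinearEquiv.apply_symm_apply, hs₁]⟩)
  have hy := hfacet _ (ht.update hu (s := 1) (by norm_num)) (by simp)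
  have hy' : B.equivFun.symm (Function.update t e₀ (-1)) ∈ F := by
    have := hF _ (hfacet _ ((ht.update hu (s := -1) (by norm_num)).two_smul_sub) (by simp [hu]))
    rwa [← hp, ← map_smul, map_sub, LinearEquiv.symm_apply_apply, sub_sub_cancel] at this
  refine hconv.segment_subset hy hy' ⟨(1 + t e₀) / 2, (1 - t e₀) / 2, by linarith, by linarith,
    by ring, B.equivFun.injective (funext fun e => ?_)⟩
  simp only [map_add, map_smul, LinearEquiv.apply_symm_apply, Pi.add_apply, Pi.smul_apply,
    smul_eq_mul, t]
  rcases eq_or_ne e e₀ with rfl | he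
  · simp only [Function.update_self]
    ring
  · simp only [Function.update_of_ne he]
    ring

theorem eq_facet_or_eq_of_facet_subset (hB : ∀ e, B e = castR (a e))
    (hprim : IsPrimitive (a e₀)) (hu : u e₀ = 0) {η : Fin n → ℤ} (hconv : Convex ℝ F)
    (hF : IsSymmetricAbout F (castR η))
    (hGF : zonotopeSigned a (Function.update u e₀ 1) ⊆ F) (hFP : F ⊆ zonotopeSigned a u) :
    F = zonotopeSigned a (Function.update u e₀ 1) ∨ F = zonotopeSigned a u := by
  have hcoord e (he : e ≠ e₀) := equivFun_apply_eq_of_facet_subset hB hGF hFP hF he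
  obtain ⟨k, hk⟩ := exists_int_equivFun_apply hB hprim hu hcoord
  have hIcc := equivFun_apply_mem_Icc_of_facet_subset hB hGF hFP hF
  rw [hk] at hIcc
  obtain rfl | rfl : k = 0 ∨ k = 1 := by
    have : (0 : ℤ) ≤ k ∧ k ≤ 1 := by exact_mod_cast Set.mem_Icc.1 hIcc
    omega
  · refine Or.inr (hFP.antisymm (zonotopeSigned_subset_of_facet_subset hB hu hconv hF ?_ hGF))
    ext e
    rcases eq_or_ne e e₀ with rfl | he
    · simp [hk, hu]
    · exact hcoord e he
  · have hFG := subset_facet_of_equivFun_apply_eq_one hB hu hFP hF (by simp [hk])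
    exact Or.inl (hFG.antisymm hGF)

end Dichotomy

section Rigidity

variable {n : ℕ} {E : Type*} [Fintype E] [DecidableEq E] {a : E → Fin n → ℤ}
  {B : Module.Basis E ℝ (Fin n → ℝ)}

theorem zonotopeSigned_mem_of_isTiling (hB : ∀ e, B e = castR (a e))
    (hprim : ∀ e, IsPrimitive (a e)) (u : E → SignType) {T : Set (Set (Fin n → ℝ))}
    (hT : IsTiling T (zonotopeSigned a u)) : zonotopeSigned a u ∈ T := by
  by_cases hfree : ∃ e₀, u e₀ = 0
  swap
  · push Not at hfree
    exact hT.mem_of_subsingleton (zonotopeSigned_subsingleton hB hfree) ⟨_, zonotopeCenter_mem hB⟩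
  obtain ⟨e₀, hu⟩ := hfree
  have hGT := (zonotopeSigned_mem_of_isTiling hB hprim _
    (hT.restrict (isFaceOf_zonotopeSigned_update_one hB hu))).1
  have hfin :=
    hT.finite ((isCompact_zonotope a).isBounded.subset (zonotopeSigned_subset_zonotope u))
  obtain ⟨F, hFT, hpF, hFG⟩ := hT.exists_mem_not_subset hfin (center_mem_closure_diff hB hu)
  obtain ⟨η, -, hFsymm⟩ := (hT.1 F hFT).exists_center
  have hGF : zonotopeSigned a (Function.update u e₀ 1) ⊆ F := by
    have hpG := zonotopeCenter_mem (a := a) (u := Function.update u e₀ 1) hB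
    have hface := (hT.2.2.2 F hFT _ hGT ⟨_, hpF, hpG⟩).2
    rw [← hface.eq_of_center_mem (isSymmetricAbout_zonotopeSigned hB) ⟨hpF, hpG⟩]
    exact Set.inter_subset_left
  rcases eq_facet_or_eq_of_facet_subset hB (hprim e₀) hu (hT.1 F hFT).convex hFsymm hGF
    (hT.subset_of_mem hFT) with h | h
  · exact absurd h.le hFG
  · exact h ▸ hFT
termination_by (Finset.univ.filter fun e => u e = 0).card
decreasing_by
  refine Finset.card_lt_card
    ((Finset.ssubset_iff_of_subset fun e he => ?_).2 ⟨e₀, by simp [hu], by simp⟩)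
  simp only [Finset.mem_filter, Finset.mem_univ, true_and] at he ⊢
  rcases eq_or_ne e e₀ with rfl | h
  · simp at he
  · simpa [h] using he

end Rigidity

theorem statement3_general {n : ℕ} (a : Fin n → Fin n → ℤ)
    (hprim : ∀ e, IsPrimitive (a e))
    (hindep : LinearIndependent ℝ fun e => castR (a e))
    (T : Set (Set (Fin n → ℝ))) (hT : IsTiling T (zonotope a)) :
    T = {F | IsFaceOf F (zonotope a)} := by
  let B := basisOfLinearIndependentOfCardEqFinrank' _ hindep (by simp)
  exact hT.eq_setOf_isFaceOf
    (zonotopeSigned_mem_of_isTiling (B := B) (fun e => by simp [B]) hprim 0 hT)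

/-- If `Z(a)` is a parallelotope (the `a_e` are primitive and form a basis of
`N_ℝ`), then the only tiling of `Z(a)` by integral zonotopes is the trivial tiling
consisting of `Z(a)` and its faces. -/
theorem statement3 {n : ℕ} (a : Fin n → Fin n → ℤ)
    (hprim : ∀ e, IsPrimitive (a e))
    (hindep : LinearIndependent ℝ fun e => castR (a e))
    (hspan : Submodule.span ℝ (Set.range fun e => castR (a e)) = ⊤)
    (T : Set (Set (Fin n → ℝ))) (hT : IsTiling T (zonotope a)) :
    T = {F | IsFaceOf F (zonotope a)} :=
  statement3_general a hprim hindep T hT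

end Hypertoric
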